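/- If λ ∈ ℝⁿ satisfies σ_j(λ) ≥ 0 for all 1 ≤ j ≤ k (i.e. λ lies in the closed Gårding cone Γ̄_k), then σ_{k−1,i}(λ) ≥ 0 for every index i, where σ_{k−1,i}(λ) is the (k−1)-st elementary symmetric polynomial of λ with the i-th component deleted. -/

import Mathlib

/-!
For `t > 0` the shifted tuple `λ + t` lies in the open cone `Γ_k`, because
`σ_j(λ + t) = ∑_{l ≤ j} C(n - l, j - l) t^(j - l) σ_l(λ)` has nonnegative terms and a positive
one. On `Γ_k` the polynomial `σ_{k-1,i}` cannot vanish: when `λ_i ≤ 0` it is positive by the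
recursion `σ_j(λ) = σ_j(λ|i) + λ_i σ_{j-1}(λ|i)`, and when `λ_i > 0` a zero would make
`σ_k(λ|i)` and `σ_{k-2}(λ|i)` both positive while `σ_{k-1}(λ|i) = 0`, against Newton's inequality
`σ_{k-1}² ≥ c σ_k σ_{k-2}`. As `σ_{k-1,i}(λ + t) > 0` for large `t`, the intermediate value
theorem rules out `σ_{k-1,i}(λ) < 0`.
-/

/-- `esymm n k f` : the `k`-th elementary symmetric polynomial of `f 0, …, f (n-1)`. -/
noncomputable def esymm (n k : ℕ) (f : Fin n → ℝ) : ℝ :=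
  ∑ s ∈ Finset.univ.powersetCard k, ∏ i ∈ s, f i

/-- `esymmDel n k i f` : the `k`-th elementary symmetric polynomial of the components of `f`
with the `i`-th one deleted. -/
noncomputable def esymmDel (n k : ℕ) (i : Fin n) (f : Fin n → ℝ) : ℝ :=
  ∑ s ∈ (Finset.univ.erase i).powersetCard k, ∏ j ∈ s, f j

open Finset Polynomial

section Identities

variable {ι R : Type*} [CommSemiring R]

noncomputable def esymmOn (A : Finset ι) (k : ℕ) (f : ι → R) : R :=
  ∑ s ∈ A.powersetCard k, ∏ i ∈ s, f i

@[simp]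
lemma esymmOn_zero (A : Finset ι) (f : ι → R) : esymmOn A 0 f = 1 := by
  simp [esymmOn]

lemma esymmOn_of_card_lt {A : Finset ι} {k : ℕ} (h : #A < k) (f : ι → R) :
    esymmOn A k f = 0 := by
  rw [esymmOn, powersetCard_eq_empty.2 h, sum_empty]

lemma esymmOn_card (A : Finset ι) (f : ι → R) : esymmOn A #A f = ∏ i ∈ A, f i := by
  rw [esymmOn, powersetCard_self, sum_singleton]

lemma esymmOn_one (A : Finset ι) (f : ι → R) : esymmOn A 1 f = ∑ i ∈ A, f i := by
  simp [esymmOn, powersetCard_one]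

lemma esymmOn_eq_esymm_map (A : Finset ι) (k : ℕ) (f : ι → R) :
    esymmOn A k f = (A.val.map f).esymm k :=
  (esymm_map_val f A k).symm

lemma esymmOn_insert [DecidableEq ι] {A : Finset ι} {a : ι} (ha : a ∉ A) (k : ℕ) (f : ι → R) :
    esymmOn (insert a A) (k + 1) f = esymmOn A (k + 1) f + f a * esymmOn A k f := by
  simp only [esymmOn_eq_esymm_map, insert_val_of_notMem ha, Multiset.map_cons, Multiset.esymm,
    Multiset.powersetCard_cons, Multiset.map_add, Multiset.sum_add, Multiset.map_map,
    Function.comp_def, Multiset.prod_cons, Multiset.sum_map_mul_left]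

lemma esymmOn_erase [DecidableEq ι] {A : Finset ι} {i : ι} (hi : i ∈ A) (k : ℕ) (f : ι → R) :
    esymmOn A (k + 1) f = esymmOn (A.erase i) (k + 1) f + f i * esymmOn (A.erase i) k f := by
  conv_lhs => rw [← insert_erase hi]
  exact esymmOn_insert (notMem_erase i A) k f

lemma sum_powersetCard_esymmOn [DecidableEq ι] (A : Finset ι) {j m : ℕ} (hjm : j ≤ m)
    (f : ι → R) :
    ∑ S ∈ A.powersetCard m, esymmOn S j f = (#A - j).choose (m - j) * esymmOn A j f := by
  unfold esymmOn
  rw [sum_comm' (t' := A.powersetCard j) (s' := fun T => (A.powersetCard m).filter (T ⊆ ·)),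
    mul_sum]
  · refine sum_congr rfl fun T hT => ?_
    rw [mem_powersetCard] at hT
    rw [sum_const, card_filter_powersetCard_subset T A m hT.1 (hT.2 ▸ hjm), hT.2, nsmul_eq_mul]
  · intro S T
    simp only [mem_powersetCard, mem_filter]
    constructor
    · rintro ⟨⟨hSA, hS⟩, hTS, hT⟩
      exact ⟨⟨⟨hSA, hS⟩, hTS⟩, hTS.trans hSA, hT⟩
    · rintro ⟨⟨⟨hSA, hS⟩, hTS⟩, -, hT⟩
      exact ⟨⟨hSA, hS⟩, hTS, hT⟩

lemma prod_add_const_eq_sum_esymmOn [DecidableEq ι] (S : Finset ι) (f : ι → R) (t : R) :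
    ∏ x ∈ S, (f x + t) = ∑ j ∈ range (#S + 1), t ^ (#S - j) * esymmOn S j f := by
  rw [prod_add, sum_powerset]
  refine sum_congr rfl fun j _ => ?_
  rw [esymmOn, mul_sum]
  refine sum_congr rfl fun T hT => ?_
  rw [mem_powersetCard] at hT
  rw [prod_const, card_sdiff_of_subset hT.1, hT.2, mul_comm]

lemma esymmOn_add_const [DecidableEq ι] (A : Finset ι) (k : ℕ) (f : ι → R) (t : R) :
    esymmOn A k (fun x => f x + t) =
      ∑ j ∈ range (k + 1), (#A - j).choose (k - j) * t ^ (k - j) * esymmOn A j f := by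
  calc esymmOn A k (fun x => f x + t)
      = ∑ S ∈ A.powersetCard k, ∑ j ∈ range (k + 1), t ^ (k - j) * esymmOn S j f := by
        refine sum_congr rfl fun S hS => ?_
        rw [prod_add_const_eq_sum_esymmOn, (mem_powersetCard.1 hS).2]
    _ = ∑ j ∈ range (k + 1), t ^ (k - j) * ∑ S ∈ A.powersetCard k, esymmOn S j f := by
        rw [sum_comm]
        simp only [mul_sum]
    _ = _ := by
        refine sum_congr rfl fun j hj => ?_
        rw [sum_powersetCard_esymmOn A (Nat.lt_succ_iff.1 (mem_range.1 hj))]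
        ring

lemma sq_sum_eq_sum_sq_add_two_mul_esymmOn_two [DecidableEq ι] (A : Finset ι) (u : ι → R) :
    (∑ i ∈ A, u i) ^ 2 = ∑ i ∈ A, u i ^ 2 + 2 * esymmOn A 2 u := by
  induction A using Finset.induction_on with
  | empty => simp [esymmOn_of_card_lt (show #(∅ : Finset ι) < 2 by simp)]
  | insert a A ha ih =>
    rw [sum_insert ha, sum_insert ha, esymmOn_insert ha 1, esymmOn_one, add_sq, ih]
    ring

end Identities

lemma esymmOn_card_sub {ι K : Type*} [DecidableEq ι] [Field K] {A : Finset ι} {j : ℕ}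
    (hj : j ≤ #A) {f : ι → K} (hf : ∀ a ∈ A, f a ≠ 0) :
    esymmOn A (#A - j) f = (∏ a ∈ A, f a) * esymmOn A j (fun a => (f a)⁻¹) := by
  rw [esymmOn, esymmOn, mul_sum]
  refine sum_nbij' (A \ ·) (A \ ·) ?_ ?_ ?_ ?_ ?_
  · intro T hT
    rw [mem_powersetCard] at hT ⊢
    exact ⟨sdiff_subset, by rw [card_sdiff_of_subset hT.1, hT.2]; omega⟩
  · intro P hP
    rw [mem_powersetCard] at hP ⊢
    exact ⟨sdiff_subset, by rw [card_sdiff_of_subset hP.1, hP.2]⟩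
  · intro T hT
    exact Finset.sdiff_sdiff_eq_self (mem_powersetCard.1 hT).1
  · intro P hP
    exact Finset.sdiff_sdiff_eq_self (mem_powersetCard.1 hP).1
  · intro T hT
    have hne : ∏ a ∈ A \ T, f a ≠ 0 := prod_ne_zero_iff.2 fun a ha => hf a (mem_sdiff.1 ha).1
    rw [prod_inv_distrib, ← prod_sdiff (mem_powersetCard.1 hT).1]
    field_simp

/-- With `u = f⁻¹`, the hypothesis says `σ_1(u) = 0`, and then `σ_2(u) = -∑ u² / 2 ≤ 0`. -/
lemma esymmOn_mul_esymmOn_nonpos_of_card_eq {ι : Type*} [DecidableEq ι] {A : Finset ι} {k : ℕ}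
    (hA : #A = k + 2) {f : ι → ℝ} (h : esymmOn A (k + 1) f = 0) :
    esymmOn A (k + 2) f * esymmOn A k f ≤ 0 := by
  by_cases hf : ∀ a ∈ A, f a ≠ 0
  · set u : ι → ℝ := fun a => (f a)⁻¹
    have hP : ∏ a ∈ A, f a ≠ 0 := prod_ne_zero_iff.2 hf
    have e₁ : esymmOn A (k + 1) f = (∏ a ∈ A, f a) * esymmOn A 1 u := by
      rw [← esymmOn_card_sub (by omega) hf, hA]; rfl
    have e₂ : esymmOn A k f = (∏ a ∈ A, f a) * esymmOn A 2 u := by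
      rw [← esymmOn_card_sub (by omega) hf, hA]; rfl
    have hu : ∑ a ∈ A, u a = 0 := by
      rw [h, eq_comm, mul_eq_zero, esymmOn_one] at e₁
      exact e₁.resolve_left hP
    have hsq := sq_sum_eq_sum_sq_add_two_mul_esymmOn_two A u
    have hpos : 0 ≤ ∑ a ∈ A, u a ^ 2 := sum_nonneg fun a _ => sq_nonneg _
    rw [hu] at hsq
    have he : esymmOn A 2 u ≤ 0 := by linarith
    rw [← hA, esymmOn_card, e₂, ← mul_assoc, ← sq]
    exact mul_nonpos_of_nonneg_of_nonpos (sq_nonneg _) he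
  · obtain ⟨a, ha, hfa⟩ : ∃ a ∈ A, f a = 0 := by simpa using hf
    rw [← hA, esymmOn_card, prod_eq_zero ha hfa, zero_mul]

lemma Multiset.esymm_of_card_lt {R : Type*} [CommSemiring R] {M : Multiset R} {k : ℕ}
    (h : card M < k) : M.esymm k = 0 := by
  simp [Multiset.esymm, Multiset.powersetCard_eq_empty k h]

/-- `N` is the multiset of roots of the derivative of `∏ a ∈ M, (X - a)`; by Rolle's theorem it
has the full number `m` of real roots. -/
lemma Multiset.exists_esymm_roots_derivative {M : Multiset ℝ} {m : ℕ} (hM : card M = m + 1) :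
    ∃ N : Multiset ℝ, card N = m ∧
      ∀ j ≤ m, (m + 1 : ℝ) * N.esymm j = (m + 1 - j : ℕ) * M.esymm j := by
  set P := (M.map fun a => X - C a).prod
  set Q := derivative P
  have hPdeg : P.natDegree = m + 1 := by rw [natDegree_multiset_prod_X_sub_C_eq_card, hM]
  have hrolle := card_roots_le_derivative P
  rw [roots_multiset_prod_X_sub_C, hM] at hrolle
  have hQdeg_le : Q.natDegree ≤ m := by
    have := natDegree_derivative_le P
    rwa [hPdeg, Nat.add_sub_cancel] at this
  have hroots : card Q.roots = Q.natDegree := by linarith [card_roots' Q]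
  have hQdeg : Q.natDegree = m := by linarith [card_roots' Q]
  have hcoeff : ∀ j ≤ m, Q.coeff (m - j) = (-1) ^ j * ((m + 1 - j : ℕ) : ℝ) * M.esymm j := by
    intro j hj
    rw [coeff_derivative, prod_X_sub_C_coeff M (by omega), hM,
      show m + 1 - (m - j + 1) = j by omega, show m + 1 - j = m - j + 1 by omega]
    push_cast
    ring
  have hlc : Q.leadingCoeff = m + 1 := by
    simpa [leadingCoeff, hQdeg, Multiset.esymm] using hcoeff 0 (Nat.zero_le m)
  refine ⟨Q.roots, hroots.trans hQdeg, fun j hj => ?_⟩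
  have hvieta := coeff_eq_esymm_roots_of_card hroots (k := m - j) (by omega)
  rw [hcoeff j hj, hlc, hQdeg, show m - (m - j) = j by omega] at hvieta
  apply mul_left_cancel₀ (pow_ne_zero j (by norm_num : (-1 : ℝ) ≠ 0))
  linear_combination -hvieta

lemma Multiset.exists_univ_map_eq {α : Type*} (M : Multiset α) :
    ∃ (n : ℕ) (g : Fin n → α), (univ : Finset (Fin n)).val.map g = M :=
  ⟨_, M.toList.get, by rw [Fin.univ_val_map, List.ofFn_get, Multiset.coe_toList]⟩

/-- The case `σ_{k+1} = 0` of Newton's inequality `σ_{k+1}² ≥ c σ_k σ_{k+2}`. Differentiating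
`∏ (X - a)` preserves it, and lowers the number of roots down to the base case `k + 2`. -/
lemma Multiset.esymm_mul_esymm_nonpos_of_esymm_eq_zero (M : Multiset ℝ) {k : ℕ}
    (h : M.esymm (k + 1) = 0) : M.esymm (k + 2) * M.esymm k ≤ 0 := by
  obtain ⟨n, hn⟩ : ∃ n, card M = n := ⟨_, rfl⟩
  induction n generalizing M with
  | zero => rw [Multiset.esymm_of_card_lt (by omega), zero_mul]
  | succ m ih =>
    rcases lt_trichotomy (m + 1) (k + 2) with hlt | heq | hgt
    · rw [Multiset.esymm_of_card_lt (by omega), zero_mul]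
    · obtain ⟨n, g, rfl⟩ := M.exists_univ_map_eq
      simp only [← esymmOn_eq_esymm_map] at h ⊢
      exact esymmOn_mul_esymmOn_nonpos_of_card_eq (by simpa [heq] using hn) h
    · obtain ⟨N, hN, hrel⟩ := M.exists_esymm_roots_derivative hn
      have hN0 : N.esymm (k + 1) = 0 := by
        have := hrel (k + 1) (by omega)
        rw [h, mul_zero] at this
        exact (mul_eq_zero.1 this).resolve_left (by positivity)
      set c₂ : ℝ := ((m + 1 - (k + 2) : ℕ) : ℝ)
      set c₀ : ℝ := ((m + 1 - k : ℕ) : ℝ)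
      have hc : 0 < c₂ * c₀ := mul_pos (by simp [c₂]; omega) (by simp [c₀]; omega)
      have e₂ := hrel (k + 2) (by omega)
      have e₀ := hrel k (by omega)
      have hscaled : c₂ * c₀ * (M.esymm (k + 2) * M.esymm k) =
          (m + 1 : ℝ) ^ 2 * (N.esymm (k + 2) * N.esymm k) := by
        linear_combination -(c₀ * M.esymm k) * e₂ - ((m + 1 : ℝ) * N.esymm (k + 2)) * e₀
      refine nonpos_of_mul_nonpos_right ?_ hc
      rw [hscaled]
      exact mul_nonpos_of_nonneg_of_nonpos (sq_nonneg _) (ih N hN0 hN)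

section GardingCone

variable {ι : Type*} {A : Finset ι} {f : ι → ℝ} {k : ℕ}

lemma esymmOn_pos (hf : ∀ x ∈ A, 0 < f x) (hk : k ≤ #A) : 0 < esymmOn A k f :=
  sum_pos (fun _ hs => prod_pos fun x hx => hf x ((mem_powersetCard.1 hs).1 hx))
    (powersetCard_nonempty.2 hk)

lemma esymmOn_mul_esymmOn_nonpos_of_esymmOn_eq_zero (A : Finset ι) (f : ι → ℝ) {k : ℕ}
    (h : esymmOn A (k + 1) f = 0) : esymmOn A (k + 2) f * esymmOn A k f ≤ 0 := by
  simp only [esymmOn_eq_esymm_map] at h ⊢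
  exact Multiset.esymm_mul_esymm_nonpos_of_esymm_eq_zero _ h

variable [DecidableEq ι]

lemma esymmOn_add_const_pos (hf : ∀ j ≤ k, 0 ≤ esymmOn A j f) (hk : k ≤ #A) {t : ℝ}
    (ht : 0 < t) : 0 < esymmOn A k (fun x => f x + t) := by
  rw [esymmOn_add_const]
  refine sum_pos' (fun j hj => ?_) ⟨0, by simp, ?_⟩
  · have := hf j (Nat.lt_succ_iff.1 (mem_range.1 hj))
    positivity
  · have := Nat.choose_pos hk
    simp only [esymmOn_zero, Nat.sub_zero, mul_one]
    positivity

lemma esymmOn_erase_pos_of_nonpos (h : ∀ j ≤ k, 0 < esymmOn A j f) {i : ι} (hi : i ∈ A)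
    (hfi : f i ≤ 0) : 0 < esymmOn (A.erase i) k f := by
  induction k with
  | zero => simp
  | succ k ih =>
    have hrec := esymmOn_erase hi k f
    have hA := h (k + 1) le_rfl
    have hA' := ih fun j hj => h j (by omega)
    nlinarith

lemma esymmOn_erase_ne_zero (h : ∀ j ≤ k + 1, 0 < esymmOn A j f) {i : ι} (hi : i ∈ A) :
    esymmOn (A.erase i) k f ≠ 0 := by
  cases k with
  | zero => simp
  | succ k =>
    intro hzero
    by_cases hfi : f i ≤ 0
    · exact (esymmOn_erase_pos_of_nonpos (fun j hj => h j (by omega)) hi hfi).ne' hzero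
    have e₂ := esymmOn_erase hi (k + 1) f
    have e₁ := esymmOn_erase hi k f
    have hnewton := esymmOn_mul_esymmOn_nonpos_of_esymmOn_eq_zero (A.erase i) f hzero
    have h₂ := h (k + 2) le_rfl
    have h₁ := h (k + 1) (by omega)
    rw [hzero] at e₁ e₂
    nlinarith

theorem esymmOn_erase_nonneg (h : ∀ j ≤ k + 1, 0 ≤ esymmOn A j f) {i : ι} (hi : i ∈ A) :
    0 ≤ esymmOn (A.erase i) k f := by
  by_contra! hneg
  have hk : k ≤ #(A.erase i) := not_lt.1 fun hlt => by
    rw [esymmOn_of_card_lt hlt] at hneg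
    exact lt_irrefl 0 hneg
  have hA : #(A.erase i) + 1 = #A := card_erase_add_one hi
  set g : ℝ → ℝ := fun t => esymmOn (A.erase i) k (fun x => f x + t)
  have hg : Continuous g := by simp only [g, esymmOn]; fun_prop
  obtain ⟨T, hT, hfT⟩ : ∃ T > 0, ∀ x ∈ A, 0 < f x + T := by
    refine ⟨1 + ∑ x ∈ A, |f x|, by positivity, fun x hx => ?_⟩
    have := single_le_sum (fun y _ => abs_nonneg (f y)) hx
    linarith [neg_abs_le (f x)]
  have hgT : 0 < g T := esymmOn_pos (fun x hx => hfT x (mem_of_mem_erase hx)) hk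
  have hg0 : g 0 = esymmOn (A.erase i) k f := by simp [g]
  obtain ⟨t, ⟨ht0, -⟩, hgt⟩ :=
    intermediate_value_Icc hT.le hg.continuousOn ⟨hg0 ▸ hneg.le, hgT.le⟩
  have htpos : 0 < t := lt_of_le_of_ne ht0 (by rintro rfl; rw [hg0] at hgt; linarith)
  exact esymmOn_erase_ne_zero
    (fun j hj => esymmOn_add_const_pos (fun l hl => h l (by omega)) (by omega) htpos) hi hgt

end GardingCone

theorem garding_cone_del_nonneg_general (n k : ℕ) (lam : Fin n → ℝ)
    (hG : ∀ j : ℕ, 1 ≤ j → j ≤ k → 0 ≤ esymm n j lam) (i : Fin n) :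
    0 ≤ esymmDel n (k - 1) i lam := by
  rcases k with _ | k
  · simp [esymmDel]
  · refine esymmOn_erase_nonneg (fun j hj => ?_) (mem_univ i)
    rcases j with _ | j
    · simp
    · exact hG (j + 1) (Nat.succ_pos j) hj

/-- If `λ` lies in the closed Gårding cone `Γ̄_k`, then all the deleted
`(k-1)`-st elementary symmetric polynomials are nonnegative. -/
theorem garding_cone_del_nonneg (n k : ℕ) (hk : 1 ≤ k) (hkn : k ≤ n) (lam : Fin n → ℝ)
    (hG : ∀ j : ℕ, 1 ≤ j → j ≤ k → 0 ≤ esymm n j lam) (i : Fin n) :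
    0 ≤ esymmDel n (k - 1) i lam :=
  garding_cone_del_nonneg_general n k lam hG i
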